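/- arXiv:1305.2058 — 3 statements merged into one kernel-verified Lean document; each statement's English description precedes it below -/
import Mathlib

section
/- Let B and Q be complete Boolean algebras, i : B → Q a regular embedding, and π_i the retraction associated to i. If i is not surjective, then π_i preserves neither meets nor complements: there exist c, d ∈ Q with π_i(c ⊓ d) ≠ π_i(c) ⊓ π_i(d), and there exists c ∈ Q with π_i(cᶜ) ≠ (π_i(c))ᶜ. -/
/-- A complete homomorphism between complete Boolean algebras: a map preserving
`⊥`, `⊤`, binary meets, binary joins, complements, and arbitrary suprema. -/
def IsCompleteHom {B Q : Type*} [CompleteBooleanAlgebra B] [CompleteBooleanAlgebra Q]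
    (i : B → Q) : Prop :=
  i ⊥ = ⊥ ∧ i ⊤ = ⊤ ∧ (∀ a b, i (a ⊓ b) = i a ⊓ i b) ∧
    (∀ a b, i (a ⊔ b) = i a ⊔ i b) ∧ (∀ a, i aᶜ = (i a)ᶜ) ∧
    (∀ S : Set B, i (sSup S) = sSup (i '' S))

/-- The retraction associated to a (regular) embedding `i`:
`π_i c = ⨅ {b : c ≤ i b}`. -/
def retraction {B Q : Type*} [CompleteBooleanAlgebra B] [CompleteBooleanAlgebra Q]
    (i : B → Q) (c : Q) : B :=
  sInf {b : B | c ≤ i b}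

lemma IsCompleteHom.sInf' {B Q : Type*} [CompleteBooleanAlgebra B] [CompleteBooleanAlgebra Q]
    {i : B → Q} (hhom : IsCompleteHom i) (S : Set B) : i (sInf S) = sInf (i '' S) := by
  obtain ⟨_, _, _, _, hc, hs⟩ := hhom
  have h1 : sInf S = (sSup (compl '' S))ᶜ := by
    rw [sSup_image, compl_iSup]
    simp [sInf_eq_iInf, compl_iSup]
  rw [h1, hc, hs]
  rw [Set.image_image]
  simp only [hc]
  rw [sSup_image, compl_iSup]
  simp [compl_iSup, sInf_image]

lemma le_i_retraction {B Q : Type*} [CompleteBooleanAlgebra B] [CompleteBooleanAlgebra Q]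
    {i : B → Q} (hhom : IsCompleteHom i) (c : Q) : c ≤ i (retraction i c) := by
  rw [retraction, hhom.sInf']
  exact le_sInf (by rintro q ⟨b, hb, rfl⟩; exact hb)

theorem retraction_not_preserve_inf_compl {B Q : Type*}
    [CompleteBooleanAlgebra B] [CompleteBooleanAlgebra Q]
    (i : B → Q) (hhom : IsCompleteHom i) (hinj : Function.Injective i)
    (hnsurj : ¬ Function.Surjective i) :
    (∃ c d : Q, retraction i (c ⊓ d) ≠ retraction i c ⊓ retraction i d) ∧
    (∃ c : Q, retraction i cᶜ ≠ (retraction i c)ᶜ) := by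
  obtain ⟨hbot, htop, hmeet, hjoin, hcompl, hsup⟩ := hhom
  obtain ⟨c, hc⟩ := not_forall.mp hnsurj
  push_neg at hc
  have hret_bot : retraction i ⊥ = ⊥ := by
    apply le_antisymm _ bot_le
    exact sInf_le (by simp [Set.mem_setOf_eq])
  -- key: retraction i c ⊓ retraction i cᶜ ≠ ⊥
  have hkey : retraction i c ⊓ retraction i cᶜ ≠ ⊥ := by
    intro h
    have h1 : c ≤ i (retraction i c) := le_i_retraction ⟨hbot, htop, hmeet, hjoin, hcompl, hsup⟩ c
    have h2 : cᶜ ≤ i (retraction i cᶜ) := le_i_retraction ⟨hbot, htop, hmeet, hjoin, hcompl, hsup⟩ cᶜ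
    have h3 : i (retraction i c) ⊓ i (retraction i cᶜ) = ⊥ := by
      rw [← hmeet, h, hbot]
    have h4 : i (retraction i cᶜ) ≤ (i (retraction i c))ᶜ :=
      (disjoint_iff.mpr h3).le_compl_left
    have h5 : i (retraction i cᶜ) ≤ cᶜ := h4.trans (compl_le_compl h1)
    have h6 : i (retraction i cᶜ) = cᶜ := le_antisymm h5 h2
    apply hc ((retraction i cᶜ)ᶜ)
    rw [hcompl, h6, compl_compl]
  constructor
  · exact ⟨c, cᶜ, by rw [inf_compl_eq_bot, hret_bot]; exact fun h => hkey h.symm⟩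
  · refine ⟨c, fun h => hkey ?_⟩
    rw [h, inf_compl_eq_bot]
end

section
/- (Pressing down Lemma for generalized stationary sets.) Let X be a nonempty set, let S be a collection of subsets of X that is stationary in X, and let F be a regressive function on S, i.e. F(Z) ∈ Z for every Z ∈ S. Then there exist x ∈ X and T ⊆ S such that T is stationary in X and F(Z) = x for every Z ∈ T. -/
/-!
Suppose no fibre `{Z ∈ S | F Z = x}` is stationary, and let `f x` witness this for each `x`.
It suffices to find one `g` such that every `g`-closed `Y` is `f x`-closed for each `x ∈ Y`
(a diagonal intersection of the sets `C_{f x}`): a `g`-closed `Y ∈ S` then contradicts the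
choice of `f (F Y)`, since `F Y ∈ Y`. For finite `X` take `g` with `C_g = {univ}`. For infinite
`X` embed codes for pairs `(x, t) : X × Finset X` into `X`; `g` builds the code of `(x, t)`
from `x` and the points of `t`, and sends the code to `f x t`.
-/

/-- `Y` is closed under `f : Finset X → X`: whenever a finite set is contained in `Y`,
its `f`-image is in `Y`. -/
def ClosedUnder {X : Type*} (f : Finset X → X) (Y : Set X) : Prop :=
  ∀ s : Finset X, ↑s ⊆ Y → f s ∈ Y

/-- A collection `S` of subsets of `X` is stationary in `X` if it meets the set of
closure points of every `f : Finset X → X`. -/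
def IsStationaryIn {X : Type*} (S : Set (Set X)) : Prop :=
  ∀ f : Finset X → X, ∃ Y ∈ S, ClosedUnder f Y

namespace DiagonalCode

abbrev Code (X : Type*) := Option (X ⊕ X × Finset X)

theorem nonempty_code_embedding (X : Type*) [Infinite X] : Nonempty (Code X ↪ X) := by
  rw [← Cardinal.le_def]
  have hX := Cardinal.aleph0_le_mk X
  simp [Cardinal.mk_finset_of_infinite, Cardinal.mul_eq_self hX, Cardinal.add_eq_self hX,
    Cardinal.add_one_eq hX]

variable {X : Type*} (ψ : Code X ↪ X)

def mark : X := ψ none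

def copy (y : X) : X := ψ (some (.inl y))

def word (x : X) (t : Finset X) : X := ψ (some (.inr (x, t)))

variable [DecidableEq X] (f : X → Finset X → X)

/- The rules `g s = v` the diagonal function obeys. Points are copied before they are appended
to a word, so that in `{word x t, copy a}` the two roles cannot be confused even when `a` is
itself a word. -/
inductive Step : Finset X → X → Prop
  | empty : Step ∅ (mark ψ)
  | singleton (y : X) : Step {y} (copy ψ y)
  | start (x : X) : Step {mark ψ, copy ψ x} (word ψ x ∅)
  | extend (x : X) (t : Finset X) (a : X) :
      Step {word ψ x t, copy ψ a} (word ψ x (insert a t))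
  | apply (x : X) (t : Finset X) : Step {mark ψ, word ψ x t} (f x t)

open Classical in
noncomputable def diag : Finset X → X := fun s =>
  if h : ∃ v, Step ψ f s v then h.choose else mark ψ

variable {ψ f}

theorem Step.unique {s : Finset X} {v w : X} (hv : Step ψ f s v) (hw : Step ψ f s w) :
    v = w := by
  -- `cases` cannot unify two finset literals, so the second index is kept as a variable.
  revert hw
  generalize hs : s = s'
  intro hw
  cases hv <;> cases hw <;>
    simp only [Finset.Subset.antisymm_iff, Finset.insert_subset_iff, Finset.singleton_subset_iff,
      Finset.mem_insert, Finset.mem_singleton, mark, copy, word] at hs <;>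
    grind

theorem diag_eq {s : Finset X} {v : X} (h : Step ψ f s v) : diag ψ f s = v := by
  have hex : ∃ v, Step ψ f s v := ⟨v, h⟩
  rw [diag, dif_pos hex]
  exact hex.choose_spec.unique h

variable {Y : Set X}

theorem mem_of_step (hY : ClosedUnder (diag ψ f) Y) {s : Finset X} {v : X} (h : Step ψ f s v)
    (hs : ↑s ⊆ Y) : v ∈ Y :=
  diag_eq h ▸ hY s hs

theorem mem_of_step_pair (hY : ClosedUnder (diag ψ f) Y) {a b v : X} (h : Step ψ f {a, b} v)
    (ha : a ∈ Y) (hb : b ∈ Y) : v ∈ Y :=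
  mem_of_step hY h (by rw [Finset.coe_pair]; exact Set.pair_subset ha hb)

theorem mark_mem (hY : ClosedUnder (diag ψ f) Y) : mark ψ ∈ Y :=
  mem_of_step hY .empty (by simp)

theorem copy_mem (hY : ClosedUnder (diag ψ f) Y) {y : X} (hy : y ∈ Y) : copy ψ y ∈ Y :=
  mem_of_step hY (.singleton y) (by simpa)

theorem word_mem (hY : ClosedUnder (diag ψ f) Y) {x : X} (hx : x ∈ Y) {t : Finset X}
    (ht : ↑t ⊆ Y) : word ψ x t ∈ Y := by
  induction t using Finset.induction_on with
  | empty => exact mem_of_step_pair hY (.start x) (mark_mem hY) (copy_mem hY hx)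
  | insert a t _ ih =>
    rw [Finset.coe_insert, Set.insert_subset_iff] at ht
    exact mem_of_step_pair hY (.extend x t a) (ih ht.2) (copy_mem hY ht.1)

theorem closedUnder_of_closedUnder_diag (hY : ClosedUnder (diag ψ f) Y) {x : X} (hx : x ∈ Y) :
    ClosedUnder (f x) Y :=
  fun t ht => mem_of_step_pair hY (.apply x t) (mark_mem hY) (word_mem hY hx ht)

end DiagonalCode

theorem exists_closedUnder_imp_eq_univ (X : Type*) [Finite X] [Nonempty X] :
    ∃ g : Finset X → X, ∀ Y, ClosedUnder g Y → Y = Set.univ := by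
  have escape (s : Finset X) : ∃ x, (s : Set X) = Set.univ ∨ x ∉ s := by
    by_cases hs : (s : Set X) = Set.univ
    · exact ⟨Classical.arbitrary X, .inl hs⟩
    · obtain ⟨x, hx⟩ := Set.ne_univ_iff_exists_notMem _ |>.mp hs
      exact ⟨x, .inr hx⟩
  choose g hg using escape
  refine ⟨g, fun Y hY => ?_⟩
  have hYs : (Y.toFinite.toFinset : Set X) = Y := Y.toFinite.coe_toFinset
  rcases hg Y.toFinite.toFinset with h | h
  · rwa [hYs] at h
  · exact absurd (by simpa using hY _ hYs.le) h

theorem exists_closedUnder_diagonal {X : Type*} [Nonempty X] (f : X → Finset X → X) :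
    ∃ g : Finset X → X, ∀ Y, ClosedUnder g Y → ∀ x ∈ Y, ClosedUnder (f x) Y := by
  cases finite_or_infinite X
  · obtain ⟨g, hg⟩ := exists_closedUnder_imp_eq_univ X
    exact ⟨g, fun Y hY _ _ _ _ => hg Y hY ▸ trivial⟩
  · classical
    obtain ⟨ψ⟩ := DiagonalCode.nonempty_code_embedding X
    exact ⟨DiagonalCode.diag ψ f, fun _ hY _ hx =>
      DiagonalCode.closedUnder_of_closedUnder_diag hY hx⟩

theorem pressing_down {X : Type*} [Nonempty X] (S : Set (Set X))
    (hS : IsStationaryIn S) (F : Set X → X) (hF : ∀ Z ∈ S, F Z ∈ Z) :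
    ∃ (x : X) (T : Set (Set X)), T ⊆ S ∧ IsStationaryIn T ∧ ∀ Z ∈ T, F Z = x := by
  by_contra! h
  have fiber_not_stationary (x : X) :
      ∃ f : Finset X → X, ∀ Z ∈ S, F Z = x → ¬ClosedUnder f Z := by
    by_contra! hx
    obtain ⟨Z, hZ, hne⟩ := h x {Z ∈ S | F Z = x} (Set.sep_subset _ _) fun g => by
      obtain ⟨Z, hZS, hZx, hZ⟩ := hx g
      exact ⟨Z, ⟨hZS, hZx⟩, hZ⟩
    exact hne hZ.2
  choose f hf using fiber_not_stationary
  obtain ⟨g, hg⟩ := exists_closedUnder_diagonal f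
  obtain ⟨Y, hYS, hY⟩ := hS g
  exact hf _ Y hYS rfl (hg Y hY _ (hF Y hYS))
end

section
/- (Normality of the generalized club filter: diagonal intersections.) Let X be a nonempty set and for each x ∈ X let f_x be a function from the finite subsets of X to X. Then there exists a single function h from the finite subsets of X to X such that C_h is contained in the diagonal intersection {Z ⊆ X : for every x ∈ Z, Z ∈ C_{f_x}}; that is, every Z ⊆ X closed under h is, for each of its elements x, closed under f_x. -/
noncomputable section ClubAux

open Classical

variable {X : Type*}

/-- Indices of "tags" occurring in a finset. -/
def tagSet (a : ℕ ↪ X) (u : Finset X) : Finset ℕ :=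
  u.preimage a a.injective.injOn

lemma mem_tagSet (a : ℕ ↪ X) (u : Finset X) (n : ℕ) :
    n ∈ tagSet a u ↔ a n ∈ u := Finset.mem_preimage

/-- A bound strictly above every tag index in `s`. -/
def bigM (a : ℕ ↪ X) (s : Finset X) : ℕ := (tagSet a s).sup Nat.succ

lemma lt_bigM (a : ℕ ↪ X) (s : Finset X) {m : ℕ} (hm : a m ∈ s) :
    m < bigM a s :=
  Nat.lt_of_succ_le (Finset.le_sup ((mem_tagSet a s m).2 hm))

/-- All pairs `(x, t)` with `x ∈ s`, `t ⊆ s`, as a list. -/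
def pairsL (s : Finset X) : List (X × Finset X) := (s ×ˢ s.powerset).toList

lemma mem_pairsL (s : Finset X) (x : X) (t : Finset X) :
    (x, t) ∈ pairsL s ↔ x ∈ s ∧ t ⊆ s := by
  simp [pairsL, Finset.mem_product]

/-- The master function. -/
def hfun (a : ℕ ↪ X) (f : X → Finset X → X) (x₀ : X) (u : Finset X) : X :=
  if u = ∅ then a 0
  else if hn : ∃ n, u = {a n} then a (hn.choose + 1)
  else
    f ((pairsL (u.erase (a ((tagSet a u).sup id)))).getD
        ((tagSet a u).sup id - bigM a (u.erase (a ((tagSet a u).sup id)))) (x₀, ∅)).1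
      ((pairsL (u.erase (a ((tagSet a u).sup id)))).getD
        ((tagSet a u).sup id - bigM a (u.erase (a ((tagSet a u).sup id)))) (x₀, ∅)).2

lemma hfun_empty (a : ℕ ↪ X) (f : X → Finset X → X) (x₀ : X) :
    hfun a f x₀ ∅ = a 0 := by simp [hfun]

lemma hfun_singleton (a : ℕ ↪ X) (f : X → Finset X → X) (x₀ : X) (n : ℕ) :
    hfun a f x₀ {a n} = a (n + 1) := by
  have h1 : ({a n} : Finset X) ≠ ∅ := by simp
  have h2 : ∃ m, ({a n} : Finset X) = {a m} := ⟨n, rfl⟩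
  have h3 : h2.choose = n := by
    have h4 : a n = a h2.choose := Finset.singleton_injective h2.choose_spec
    exact (a.injective h4).symm
  simp [hfun, h1, h2, h3]

lemma hfun_code (a : ℕ ↪ X) (f : X → Finset X → X) (x₀ : X)
    (s : Finset X) (hs : s.Nonempty) (k : ℕ) :
    hfun a f x₀ (insert (a (bigM a s + k)) s)
      = f ((pairsL s).getD k (x₀, ∅)).1 ((pairsL s).getD k (x₀, ∅)).2 := by
  set m := bigM a s + k with hm
  have ham : a m ∉ s := fun h => absurd (lt_bigM a s h) (by omega)
  set u := insert (a m) s with hu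
  have hune : u ≠ ∅ := by simp [hu]
  have hcard : 2 ≤ u.card := by
    obtain ⟨y, hy⟩ := hs
    have h1 : 1 ≤ s.card := Finset.card_pos.2 ⟨y, hy⟩
    have h2 : u.card = s.card + 1 := by
      rw [hu, Finset.card_insert_of_notMem ham]
    omega
  have hnotsing : ¬ ∃ n, u = {a n} := by
    rintro ⟨n, hn⟩
    rw [hn] at hcard
    simp at hcard
  have htag : ∀ n, n ∈ tagSet a u ↔ n = m ∨ a n ∈ s := by
    intro n
    simp only [mem_tagSet, hu, Finset.mem_insert]
    constructor
    · rintro (h | h)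
      · exact Or.inl (a.injective h)
      · exact Or.inr h
    · rintro (rfl | h)
      · exact Or.inl rfl
      · exact Or.inr h
  have hmax : (tagSet a u).sup id = m := by
    apply le_antisymm
    · apply Finset.sup_le
      intro n hn
      rcases (htag n).1 hn with rfl | hn
      · exact le_refl _
      · have := lt_bigM a s hn
        simp only [id]
        omega
    · exact Finset.le_sup (f := id) ((htag m).2 (Or.inl rfl))
  have herase : u.erase (a m) = s := by
    rw [hu, Finset.erase_insert ham]
  have hksub : m - bigM a s = k := by omega
  rw [hfun, if_neg hune, dif_neg hnotsing, hmax, herase, hksub]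

theorem club_aux_infinite {X : Type*} [Infinite X] (f : X → Finset X → X) :
    ∃ h : Finset X → X, ∀ Z : Set X, ClosedUnder h Z →
      ∀ x ∈ Z, ClosedUnder (f x) Z := by
  obtain ⟨x₀⟩ : Nonempty X := inferInstance
  set a := Infinite.natEmbedding X with ha
  refine ⟨hfun a f x₀, fun Z hZ x hx t ht => ?_⟩
  have htags : ∀ n, a n ∈ Z := by
    intro n
    induction n with
    | zero =>
        have := hZ ∅ (by simp)
        rwa [hfun_empty] at this
    | succ n ih =>
        have := hZ {a n} (by simpa using ih)
        rwa [hfun_singleton] at this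
  set s := insert x t with hsdef
  have hs : s.Nonempty := ⟨x, Finset.mem_insert_self x t⟩
  have hssub : ↑s ⊆ Z := by
    intro y hy
    rcases Finset.mem_insert.1 hy with rfl | hy
    · exact hx
    · exact ht hy
  have hmem : (x, t) ∈ pairsL s :=
    (mem_pairsL s x t).2 ⟨Finset.mem_insert_self x t, Finset.subset_insert x t⟩
  obtain ⟨k, hk, hget⟩ := List.mem_iff_getElem.1 hmem
  have hgetD : (pairsL s).getD k (x₀, ∅) = (x, t) := by
    rw [List.getD_eq_getElem _ _ hk, hget]
  have hcode := hfun_code a f x₀ s hs k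
  rw [hgetD] at hcode
  have husub : ↑(insert (a (bigM a s + k)) s) ⊆ Z := by
    intro y hy
    rcases Finset.mem_insert.1 hy with rfl | hy
    · exact htags _
    · exact hssub hy
  have := hZ _ husub
  rwa [hcode] at this

theorem club_aux_finite {X : Type*} [Nonempty X] [Finite X] (f : X → Finset X → X) :
    ∃ h : Finset X → X, ∀ Z : Set X, ClosedUnder h Z →
      ∀ x ∈ Z, ClosedUnder (f x) Z := by
  have : Fintype X := Fintype.ofFinite X
  refine ⟨fun s => if hc : (sᶜ : Finset X).Nonempty then hc.choose else Classical.arbitrary X,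
    fun Z hZ x hx t ht => ?_⟩
  have hZuniv : Z = Set.univ := by
    by_contra hne
    have hfin : Z.Finite := Set.toFinite Z
    have hssub : ↑hfin.toFinset ⊆ Z := by
      rw [Set.Finite.coe_toFinset]
    have hc : ((hfin.toFinset)ᶜ : Finset X).Nonempty := by
      obtain ⟨z, hz⟩ : ∃ z, z ∉ Z := by
        by_contra h
        push_neg at h
        exact hne (Set.eq_univ_of_forall h)
      refine ⟨z, Finset.mem_compl.2 ?_⟩
      rw [Set.Finite.mem_toFinset]
      exact hz
    have h1 := hZ hfin.toFinset hssub
    simp only at h1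
    rw [dif_pos hc] at h1
    have h2 := hc.choose_spec
    rw [Finset.mem_compl, Set.Finite.mem_toFinset] at h2
    exact h2 h1
  subst hZuniv
  trivial

end ClubAux

theorem club_filter_normal_diagonal {X : Type*} [Nonempty X]
    (f : X → Finset X → X) :
    ∃ h : Finset X → X, ∀ Z : Set X, ClosedUnder h Z →
      ∀ x ∈ Z, ClosedUnder (f x) Z := by
  by_cases hX : Infinite X
  · exact club_aux_infinite f
  · have : Finite X := not_infinite_iff_finite.mp hX
    exact club_aux_finite f
end
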